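/- Let X₁, X₂ be Banach spaces and Y₁ ⊆ X₁, Y₂ ⊆ X₂ nonzero closed subspaces, X = X₁ ⊕_∞ X₂, Y = Y₁ ⊕_∞ Y₂. If (X, Y, CB(X)) has property-(P₁), then for each i ∈ {1,2}, (X_i, Y_i, CB(X_i)) has property-(P₁). -/

import Mathlib

open Metric Set Bornology Pointwise

/-- The farthest distance `r(v,B) = sup_{b ∈ B} ‖v - b‖`. -/
noncomputable def farr {X : Type*} [NormedAddCommGroup X] (v : X) (B : Set X) : ℝ :=
  ⨆ b : B, ‖v - (b : X)‖

/-- The restricted Chebyshev radius `rad_V(B) = inf_{v ∈ V} r(v,B)`. -/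
noncomputable def rad {X : Type*} [NormedAddCommGroup X] (V B : Set X) : ℝ :=
  ⨅ v : V, farr (v : X) B

/-- The set of restricted Chebyshev centers of `B` in `V`. -/
noncomputable def cheb {X : Type*} [NormedAddCommGroup X] (V B : Set X) : Set X :=
  {v ∈ V | farr v B = rad V B}

/-- Property-(P₁) for the triplet `(X, V, CB(X))`: restricted Chebyshev centers exist for
every nonempty closed bounded set and near-centers are close to centers. -/
noncomputable def propP1 {X : Type*} [NormedAddCommGroup X] (V : Set X) : Prop :=
  ∀ B : Set X, B.Nonempty → IsClosed B → IsBounded B →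
    (cheb V B).Nonempty ∧ ∀ ε > (0 : ℝ), ∃ δ > (0 : ℝ),
      {v ∈ V | farr v B ≤ rad V B + δ} ⊆ cheb V B + closedBall 0 ε

/-!
Embed a closed bounded `B₁ ⊆ X₁` as `B₁ × {0}` in the ℓ∞-sum. Then
`r((v₁, v₂), B₁ × {0}) = max (r(v₁, B₁), ‖v₂‖)`, so the restricted radius is unchanged
(take `v₂ = 0 ∈ V₂`), first coordinates of centres of `B₁ × {0}` are centres of `B₁`, and
`(v₁, 0)` is a `δ`-near centre exactly when `v₁` is; projecting to the first coordinate does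
not increase norms. The second factor follows by the isometric coordinate swap.
-/

section Farthest

variable {X : Type*} [NormedAddCommGroup X]

lemma bddAbove_range_norm_sub {B : Set X} (hB : IsBounded B) (v : X) :
    BddAbove (range fun b : B => ‖v - (b : X)‖) := by
  obtain ⟨C, hC⟩ := hB.exists_norm_le
  refine ⟨‖v‖ + C, ?_⟩
  rintro _ ⟨b, rfl⟩
  exact (norm_sub_le _ _).trans (by gcongr; exact hC b b.2)

lemma norm_sub_le_farr {B : Set X} (hB : IsBounded B) {v b : X} (hb : b ∈ B) :
    ‖v - b‖ ≤ farr v B :=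
  le_ciSup (bddAbove_range_norm_sub hB v) ⟨b, hb⟩

lemma farr_le {B : Set X} (hne : B.Nonempty) {v : X} {r : ℝ}
    (h : ∀ b ∈ B, ‖v - b‖ ≤ r) : farr v B ≤ r :=
  have := hne.to_subtype
  ciSup_le fun b => h b b.2

lemma farr_nonneg {B : Set X} (hne : B.Nonempty) (hB : IsBounded B) (v : X) :
    0 ≤ farr v B :=
  (norm_nonneg _).trans (norm_sub_le_farr hB hne.some_mem)

lemma rad_le_farr {V B : Set X} (hne : B.Nonempty) (hB : IsBounded B) {v : X} (hv : v ∈ V) :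
    rad V B ≤ farr v B :=
  ciInf_le (f := fun w : V => farr (w : X) B)
    ⟨0, forall_mem_range.2 fun _ => farr_nonneg hne hB _⟩ ⟨v, hv⟩

lemma le_rad {V B : Set X} (hV : V.Nonempty) {r : ℝ} (h : ∀ v ∈ V, r ≤ farr v B) :
    r ≤ rad V B :=
  have := hV.to_subtype
  le_ciInf fun v => h v v.2

end Farthest

section Isometric

variable {X X' : Type*} [NormedAddCommGroup X] [NormedAddCommGroup X']
  {e : X ≃+ X'}

lemma farr_image (he : ∀ x, ‖e x‖ = ‖x‖) (v : X) (B : Set X) :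
    farr (e v) (e '' B) = farr v B := by
  show sSup _ = sSup _
  congr 1
  ext r
  simp [← map_sub, he]

lemma rad_image (he : ∀ x, ‖e x‖ = ‖x‖) (V B : Set X) : rad (e '' V) (e '' B) = rad V B := by
  show sInf _ = sInf _
  congr 1
  ext r
  simp [farr_image he]

lemma cheb_image (he : ∀ x, ‖e x‖ = ‖x‖) (V B : Set X) :
    cheb (e '' V) (e '' B) = e '' cheb V B := by
  ext v
  simp only [cheb, rad_image he, mem_image, mem_ofPred_eq]
  constructor
  · rintro ⟨⟨x, hx, rfl⟩, hfx⟩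
    exact ⟨x, ⟨hx, by rwa [farr_image he] at hfx⟩, rfl⟩
  · rintro ⟨x, ⟨hx, hfx⟩, rfl⟩
    exact ⟨⟨x, hx, rfl⟩, by rwa [farr_image he]⟩

end Isometric

lemma propP1.image {X X' : Type*} [NormedAddCommGroup X] [NormedAddCommGroup X'] {V : Set X}
    (hV : propP1 V) (e : X ≃+ X') (he : ∀ x, ‖e x‖ = ‖x‖) : propP1 (e '' V) := by
  intro B' hne hclosed hbdd
  obtain ⟨C, hC⟩ := hbdd.exists_norm_le
  obtain ⟨hcenter, happrox⟩ := hV (e ⁻¹' B') (hne.preimage e.surjective)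
    (hclosed.preimage (AddMonoidHomClass.isometry_of_norm e he).continuous)
    (isBounded_iff_forall_norm_le.2 ⟨C, fun x hx => he x ▸ hC _ hx⟩)
  rw [← image_preimage_eq B' e.surjective, cheb_image he, rad_image he]
  refine ⟨hcenter.image e, fun ε hε => ?_⟩
  obtain ⟨δ, hδ, hsub⟩ := happrox ε hε
  refine ⟨δ, hδ, ?_⟩
  rintro _ ⟨⟨v, hv, rfl⟩, hvδ⟩
  rw [farr_image he] at hvδ
  obtain ⟨c, hc, u, hu, rfl⟩ := hsub ⟨hv, hvδ⟩
  refine ⟨e c, mem_image_of_mem e hc, e u, ?_, (map_add e c u).symm⟩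
  simpa [he] using hu

lemma propP1.prod_comm {X₁ X₂ : Type*} [NormedAddCommGroup X₁] [NormedAddCommGroup X₂]
    {V₁ : Set X₁} {V₂ : Set X₂} (h : propP1 (V₁ ×ˢ V₂)) : propP1 (V₂ ×ˢ V₁) := by
  simpa [image_swap_prod] using
    h.image AddEquiv.prodComm fun x => by simp [Prod.norm_def, max_comm]

section Product

variable {X₁ X₂ : Type*} [NormedAddCommGroup X₁] [NormedAddCommGroup X₂] {B₁ : Set X₁}

lemma farr_prod_singleton_zero (hne : B₁.Nonempty) (hB : IsBounded B₁) (v : X₁ × X₂) :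
    farr v (B₁ ×ˢ {0}) = max (farr v.1 B₁) ‖v.2‖ := by
  have hB' : IsBounded (B₁ ×ˢ {(0 : X₂)}) := hB.prod isBounded_singleton
  have hmem : ∀ b ∈ B₁, ((b, 0) : X₁ × X₂) ∈ B₁ ×ˢ {0} := fun b hb => ⟨hb, rfl⟩
  apply le_antisymm
  · refine farr_le (hne.prod (singleton_nonempty _)) ?_
    rintro ⟨b, _⟩ ⟨hb, rfl⟩
    simpa [Prod.norm_def] using max_le_max (norm_sub_le_farr hB hb) le_rfl
  · obtain ⟨b₀, hb₀⟩ := hne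
    refine max_le (farr_le ⟨b₀, hb₀⟩ fun b hb => ?_) ?_
    · exact (norm_fst_le (v - (b, 0))).trans (norm_sub_le_farr hB' (hmem b hb))
    · simpa using (norm_snd_le (v - (b₀, 0))).trans (norm_sub_le_farr hB' (hmem b₀ hb₀))

lemma farr_mk_zero_prod_singleton_zero (hne : B₁.Nonempty) (hB : IsBounded B₁) (v : X₁) :
    farr ((v, 0) : X₁ × X₂) (B₁ ×ˢ {0}) = farr v B₁ := by
  rw [farr_prod_singleton_zero hne hB, norm_zero, max_eq_left (farr_nonneg hne hB v)]

lemma rad_prod_singleton_zero {V₁ : Set X₁} {V₂ : Set X₂} (hne : B₁.Nonempty)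
    (hB : IsBounded B₁) (hV₁ : V₁.Nonempty) (h0 : 0 ∈ V₂) :
    rad (V₁ ×ˢ V₂) (B₁ ×ˢ {0}) = rad V₁ B₁ := by
  apply le_antisymm
  · refine le_rad hV₁ fun v hv => ?_
    rw [← farr_mk_zero_prod_singleton_zero (X₂ := X₂) hne hB]
    exact rad_le_farr (hne.prod (singleton_nonempty 0)) (hB.prod isBounded_singleton)
      (mk_mem_prod hv h0)
  · refine le_rad (hV₁.prod ⟨0, h0⟩) fun v hv => ?_
    rw [farr_prod_singleton_zero hne hB]
    exact (rad_le_farr hne hB hv.1).trans (le_max_left _ _)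

end Product

lemma propP1.of_prod_left {X₁ X₂ : Type*} [NormedAddCommGroup X₁] [NormedAddCommGroup X₂]
    {V₁ : Set X₁} {V₂ : Set X₂} (h : propP1 (V₁ ×ˢ V₂)) (h0 : 0 ∈ V₂) : propP1 V₁ := by
  intro B₁ hne hclosed hbdd
  obtain ⟨⟨c, hc⟩, happrox⟩ := h (B₁ ×ˢ {(0 : X₂)}) (hne.prod (singleton_nonempty 0))
    (hclosed.prod isClosed_singleton) (hbdd.prod isBounded_singleton)
  have hrad := rad_prod_singleton_zero hne hbdd ⟨c.1, hc.1.1⟩ h0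
  have hcheb : ∀ c ∈ cheb (V₁ ×ˢ V₂) (B₁ ×ˢ {0}), c.1 ∈ cheb V₁ B₁ := by
    rintro c ⟨hcV, hcf⟩
    refine ⟨hcV.1, le_antisymm ?_ (rad_le_farr hne hbdd hcV.1)⟩
    rw [← hrad, ← hcf, farr_prod_singleton_zero hne hbdd]
    exact le_max_left _ _
  refine ⟨⟨c.1, hcheb c hc⟩, fun ε hε => ?_⟩
  obtain ⟨δ, hδ, hsub⟩ := happrox ε hε
  refine ⟨δ, hδ, ?_⟩
  rintro v ⟨hv, hvδ⟩
  obtain ⟨c, hc, u, hu, hcu⟩ := hsub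
    ⟨mk_mem_prod hv h0, by rwa [farr_mk_zero_prod_singleton_zero hne hbdd, hrad]⟩
  refine ⟨c.1, hcheb c hc, u.1, ?_, congrArg Prod.fst hcu⟩
  rw [mem_closedBall_zero_iff] at hu ⊢
  exact (norm_fst_le u).trans hu

lemma propP1.of_prod_right {X₁ X₂ : Type*} [NormedAddCommGroup X₁] [NormedAddCommGroup X₂]
    {V₁ : Set X₁} {V₂ : Set X₂} (h : propP1 (V₁ ×ˢ V₂)) (h0 : 0 ∈ V₁) : propP1 V₂ :=
  h.prod_comm.of_prod_left h0

theorem stmt9_general {X₁ X₂ : Type*} [NormedAddCommGroup X₁] [NormedSpace ℝ X₁]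
    [NormedAddCommGroup X₂] [NormedSpace ℝ X₂]
    (Y₁ : Subspace ℝ X₁) (Y₂ : Subspace ℝ X₂)
    (h : propP1 ((Y₁ : Set X₁) ×ˢ (Y₂ : Set X₂))) :
    propP1 (Y₁ : Set X₁) ∧ propP1 (Y₂ : Set X₂) :=
  ⟨h.of_prod_left Y₂.zero_mem, h.of_prod_right Y₁.zero_mem⟩

theorem stmt9 {X₁ X₂ : Type*} [NormedAddCommGroup X₁] [NormedSpace ℝ X₁] [CompleteSpace X₁]
    [NormedAddCommGroup X₂] [NormedSpace ℝ X₂] [CompleteSpace X₂]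
    (Y₁ : Subspace ℝ X₁) (Y₂ : Subspace ℝ X₂)
    (hY₁ne : Y₁ ≠ ⊥) (hY₁c : IsClosed (Y₁ : Set X₁))
    (hY₂ne : Y₂ ≠ ⊥) (hY₂c : IsClosed (Y₂ : Set X₂))
    (h : propP1 ((Y₁ : Set X₁) ×ˢ (Y₂ : Set X₂))) :
    propP1 (Y₁ : Set X₁) ∧ propP1 (Y₂ : Set X₂) :=
  stmt9_general Y₁ Y₂ h
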